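/- arXiv:2406.06903 — 3 statements merged into one kernel-verified Lean document; each statement's English description precedes it below -/
import Mathlib

section
/- Let μ be a finite nonnegative measure on [0,∞) with total mass |μ| > 0, and define φ(z) = ∫₀^∞ e^{-tz} dμ(t). Then for all β₁, β₂ ≥ 0 with β₂ > 0, one has (φ(4β₁²) − φ(4β₁² + 4β₂²)) · |μ| ≤ (φ(0) − φ(4β₂²)) · ∫₀^∞ e^{-4β₁² t} dμ(t). -/
/-!
With `a = 4β₁²`, `b = 4β₂²` and `M = μ(ℝ) = φ(0)`, the inequality rearranges to
`φ(a) φ(b) ≤ M φ(a + b)`, i.e. `(∫ f) (∫ g) ≤ M ∫ f g` for `f t = e^{-a t}` and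
`g t = e^{-b t}`. Both are antitone, so this is Chebyshev's integral inequality, obtained by
integrating the rearrangement inequality `f x g y + f y g x ≤ f x g x + f y g y` over `μ ⊗ μ`.
-/

open MeasureTheory

noncomputable def phi (μ : Measure ℝ) (z : ℝ) : ℝ := ∫ t, Real.exp (-(t * z)) ∂μ

theorem Monovary.integral_mul_integral_le_measureReal_univ_mul_integral {α : Type*}
    [MeasurableSpace α] {μ : Measure α} [IsFiniteMeasure μ] {f g : α → ℝ}
    (hfg : Monovary f g) (hf : Integrable f μ) (hg : Integrable g μ)
    (hfg_int : Integrable (f * g) μ) :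
    (∫ x, f x ∂μ) * ∫ x, g x ∂μ ≤ μ.real Set.univ * ∫ x, f x * g x ∂μ := by
  have hcross : Integrable (fun p : α × α => f p.1 * g p.2) (μ.prod μ) := hf.mul_prod hg
  have hcross' : Integrable (fun p : α × α => g p.1 * f p.2) (μ.prod μ) := hg.mul_prod hf
  have hdiag : Integrable (fun p : α × α => f p.1 * g p.1) (μ.prod μ) := hfg_int.comp_fst μ
  have hdiag' : Integrable (fun p : α × α => f p.2 * g p.2) (μ.prod μ) := hfg_int.comp_snd μ
  have hrearr : ∫ p, f p.1 * g p.2 + g p.1 * f p.2 ∂μ.prod μ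
      ≤ ∫ p, f p.1 * g p.1 + f p.2 * g p.2 ∂μ.prod μ :=
    integral_mono (hcross.add hcross') (hdiag.add hdiag')
      fun p => by
        simpa only [mul_comm (f p.2)] using monovary_iff_mul_rearrangement.1 hfg p.1 p.2
  rw [integral_add hcross hcross', integral_add hdiag hdiag', integral_prod_mul f g,
    integral_prod_mul g f,
    integral_fun_fst (fun x => f x * g x), integral_fun_snd (fun x => f x * g x),
    smul_eq_mul] at hrearr
  linarith

theorem Real.antitone_exp_neg_mul {z : ℝ} (hz : 0 ≤ z) :
    Antitone fun t : ℝ => Real.exp (-(t * z)) :=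
  fun _ _ hst => Real.exp_le_exp.2 (neg_le_neg (mul_le_mul_of_nonneg_right hst hz))

theorem Real.exp_neg_mul_add (t a b : ℝ) :
    Real.exp (-(t * (a + b))) = Real.exp (-(t * a)) * Real.exp (-(t * b)) := by
  rw [mul_add, neg_add, Real.exp_add]

section LaplaceTransform

variable {μ : Measure ℝ}

theorem integrable_exp_neg_mul_of_measure_Iio_zero [IsFiniteMeasure μ]
    (hsupp : μ (Set.Iio 0) = 0) {z : ℝ} (hz : 0 ≤ z) :
    Integrable (fun t => Real.exp (-(t * z))) μ := by
  have hnonneg : ∀ᵐ t ∂μ, 0 ≤ t := by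
    rw [ae_iff]
    simp only [not_le]
    exact hsupp
  refine Integrable.of_bound (by fun_prop) 1 (hnonneg.mono fun t ht => ?_)
  rw [Real.norm_of_nonneg (Real.exp_pos _).le, Real.exp_le_one_iff, neg_nonpos]
  positivity

theorem phi_zero : phi μ 0 = μ.real Set.univ := by
  simp [phi]

theorem phi_add (a b : ℝ) :
    phi μ (a + b) = ∫ t, Real.exp (-(t * a)) * Real.exp (-(t * b)) ∂μ := by
  simp only [phi, Real.exp_neg_mul_add]

theorem phi_mul_phi_le_measureReal_univ_mul_phi_add [IsFiniteMeasure μ]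
    (hsupp : μ (Set.Iio 0) = 0) {a b : ℝ} (ha : 0 ≤ a) (hb : 0 ≤ b) :
    phi μ a * phi μ b ≤ μ.real Set.univ * phi μ (a + b) := by
  have hint := fun {z : ℝ} (hz : 0 ≤ z) => integrable_exp_neg_mul_of_measure_Iio_zero hsupp hz
  rw [phi_add]
  exact Monovary.integral_mul_integral_le_measureReal_univ_mul_integral
    ((Real.antitone_exp_neg_mul ha).monovary (Real.antitone_exp_neg_mul hb)) (hint ha) (hint hb)
    ((hint (add_nonneg ha hb)).congr (ae_of_all _ fun t => Real.exp_neg_mul_add t a b))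

end LaplaceTransform

theorem stmt2_general (μ : Measure ℝ) [IsFiniteMeasure μ] (hsupp : μ (Set.Iio 0) = 0)
    (β₁ β₂ : ℝ) :
    (phi μ (4 * β₁ ^ 2) - phi μ (4 * β₁ ^ 2 + 4 * β₂ ^ 2)) * (μ Set.univ).toReal
      ≤ (phi μ 0 - phi μ (4 * β₂ ^ 2)) * ∫ t, Real.exp (-(4 * β₁ ^ 2 * t)) ∂μ := by
  have hchebyshev := phi_mul_phi_le_measureReal_univ_mul_phi_add hsupp
    (a := 4 * β₁ ^ 2) (b := 4 * β₂ ^ 2) (by positivity) (by positivity)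
  have hrhs : ∫ t, Real.exp (-(4 * β₁ ^ 2 * t)) ∂μ = phi μ (4 * β₁ ^ 2) := by
    simp only [phi, mul_comm]
  rw [hrhs, phi_zero, ← measureReal_def]
  linarith

/-- for a finite nonnegative measure μ on [0,∞) with |μ| > 0 and β₁ ≥ 0, β₂ > 0,
(φ(4β₁²) − φ(4β₁² + 4β₂²))·|μ| ≤ (φ(0) − φ(4β₂²))·∫₀^∞ e^{-4β₁² t} dμ(t). -/
theorem stmt2 (μ : Measure ℝ) [IsFiniteMeasure μ] (hsupp : μ (Set.Iio 0) = 0)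
    (hpos : 0 < (μ Set.univ).toReal) (β₁ β₂ : ℝ) (hβ₁ : 0 ≤ β₁) (hβ₂ : 0 < β₂) :
    (phi μ (4 * β₁ ^ 2) - phi μ (4 * β₁ ^ 2 + 4 * β₂ ^ 2)) * (μ Set.univ).toReal
      ≤ (phi μ 0 - phi μ (4 * β₂ ^ 2)) * ∫ t, Real.exp (-(4 * β₁ ^ 2 * t)) ∂μ :=
  stmt2_general μ hsupp β₁ β₂
end

section
/- Let φ(z) = ∫₀^∞ e^{-tz} dμ(t) with μ a finite nonnegative measure on [0,∞), μ((0,∞)) > 0, and suppose Δ₁ > Δ₂ > 0. Then for every fixed β₂ ≥ 0, the map β₁ ↦ L_Δ(β₁, β₂) = (φ(0) − φ(4β₁² + 4β₂²))(Δ₁² + Δ₂²) − (φ(4β₁²) − φ(4β₂²))(Δ₁² − Δ₂²) is strictly increasing on [0,∞). -/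
open MeasureTheory

/-- L_Δ(β) = (φ(0) − φ(4β₁² + 4β₂²))(Δ₁² + Δ₂²) − (φ(4β₁²) − φ(4β₂²))(Δ₁² − Δ₂²). -/
noncomputable def L (φ : ℝ → ℝ) (Δ₁ Δ₂ β₁ β₂ : ℝ) : ℝ :=
  (φ 0 - φ (4 * β₁ ^ 2 + 4 * β₂ ^ 2)) * (Δ₁ ^ 2 + Δ₂ ^ 2)
    - (φ (4 * β₁ ^ 2) - φ (4 * β₂ ^ 2)) * (Δ₁ ^ 2 - Δ₂ ^ 2)

open Set

section LaplaceTransform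

variable {μ : Measure ℝ}

lemma ae_nonneg_of_measure_Iio_eq_zero (hsupp : μ (Iio 0) = 0) : ∀ᵐ t ∂μ, 0 ≤ t := by
  rw [ae_iff]
  simp only [not_le]
  exact hsupp

lemma integrable_exp_neg_mul [IsFiniteMeasure μ] (hsupp : μ (Iio 0) = 0) {z : ℝ} (hz : 0 ≤ z) :
    Integrable (fun t => Real.exp (-(t * z))) μ := by
  refine (integrable_const 1).mono' (by fun_prop) ?_
  filter_upwards [ae_nonneg_of_measure_Iio_eq_zero hsupp] with t ht
  rw [Real.norm_of_nonneg (Real.exp_pos _).le, Real.exp_le_one_iff, neg_nonpos]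
  exact mul_nonneg ht hz

lemma phi_strictAntiOn [IsFiniteMeasure μ] (hsupp : μ (Iio 0) = 0) (hpos : 0 < μ (Ioi 0)) :
    StrictAntiOn (phi μ) (Ici 0) := by
  intro u hu v hv huv
  rw [← sub_pos, phi, phi, ← integral_sub (integrable_exp_neg_mul hsupp hu)
    (integrable_exp_neg_mul hsupp hv)]
  have hdecay : ∀ {t : ℝ}, 0 < t → Real.exp (-(t * v)) < Real.exp (-(t * u)) := fun ht =>
    Real.exp_lt_exp.2 (neg_lt_neg (mul_lt_mul_of_pos_left huv ht))
  refine (integral_pos_iff_support_of_nonneg_ae ?_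
    ((integrable_exp_neg_mul hsupp hu).sub (integrable_exp_neg_mul hsupp hv))).2
    (hpos.trans_le (measure_mono fun t ht => (sub_pos.2 (hdecay ht)).ne'))
  filter_upwards [ae_nonneg_of_measure_Iio_eq_zero hsupp] with t ht
  rcases ht.eq_or_lt with rfl | ht
  · simp
  · exact (sub_pos.2 (hdecay ht)).le

end LaplaceTransform

/-- `L φ Δ₁ Δ₂ b β₂ - L φ Δ₁ Δ₂ a β₂` is the sum of the two positive terms
`(φ (4a² + 4β₂²) - φ (4b² + 4β₂²)) (Δ₁² + Δ₂²)` and `(φ (4a²) - φ (4b²)) (Δ₁² - Δ₂²)`. -/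
lemma strictMonoOn_L_of_strictAntiOn {φ : ℝ → ℝ} (hφ : StrictAntiOn φ (Ici 0)) {Δ₁ Δ₂ : ℝ}
    (hΔ : Δ₂ ^ 2 < Δ₁ ^ 2) (β₂ : ℝ) :
    StrictMonoOn (fun β₁ => L φ Δ₁ Δ₂ β₁ β₂) (Ici 0) := by
  intro a (ha : 0 ≤ a) b _ hab
  have hsq : 4 * a ^ 2 < 4 * b ^ 2 := by nlinarith
  have hshift : φ (4 * b ^ 2 + 4 * β₂ ^ 2) < φ (4 * a ^ 2 + 4 * β₂ ^ 2) :=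
    hφ (mem_Ici.2 (by positivity)) (mem_Ici.2 (by positivity)) (by linarith)
  have hbare : φ (4 * b ^ 2) < φ (4 * a ^ 2) :=
    hφ (mem_Ici.2 (by positivity)) (mem_Ici.2 (by positivity)) hsq
  have hsum : 0 < Δ₁ ^ 2 + Δ₂ ^ 2 := by linarith [sq_nonneg Δ₂]
  simp only [L]
  linarith [mul_pos (sub_pos.2 hshift) hsum, mul_pos (sub_pos.2 hbare) (sub_pos.2 hΔ)]

theorem stmt10_general (μ : Measure ℝ) [IsFiniteMeasure μ] (hsupp : μ (Set.Iio 0) = 0)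
    (hpos : 0 < μ (Set.Ioi 0)) (Δ₁ Δ₂ : ℝ) (h12 : Δ₂ < Δ₁) (h2 : 0 < Δ₂)
    (β₂ : ℝ) :
    StrictMonoOn (fun β₁ => L (phi μ) Δ₁ Δ₂ β₁ β₂) (Set.Ici 0) :=
  strictMonoOn_L_of_strictAntiOn (phi_strictAntiOn hsupp hpos)
    (pow_lt_pow_left₀ h12 h2.le two_ne_zero) β₂

/-- with φ(z) = ∫₀^∞ e^{-tz} dμ(t), μ finite nonnegative on [0,∞) not
concentrated at 0, and Δ₁ > Δ₂ > 0, for every fixed β₂ ≥ 0 the map β₁ ↦ L_Δ(β₁,β₂) is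
strictly increasing on [0,∞). -/
theorem stmt10 (μ : Measure ℝ) [IsFiniteMeasure μ] (hsupp : μ (Set.Iio 0) = 0)
    (hpos : 0 < μ (Set.Ioi 0)) (Δ₁ Δ₂ : ℝ) (h12 : Δ₂ < Δ₁) (h2 : 0 < Δ₂)
    (β₂ : ℝ) (hβ₂ : 0 ≤ β₂) :
    StrictMonoOn (fun β₁ => L (phi μ) Δ₁ Δ₂ β₁ β₂) (Set.Ici 0) :=
  stmt10_general μ hsupp hpos Δ₁ Δ₂ h12 h2 β₂
end

section
/- Let (X,Y), (X',Y') be i.i.d. from P_Δ and let k_Y(y,y') = φ_Y(yy') be a kernel on {±1} with φ_Y(1) > φ_Y(−1). Define HSIC(βX; Y) = E[k(β⊙X, β⊙X')k_Y(Y,Y')] + E[k(β⊙X, β⊙X')]E[k_Y(Y,Y')] − 2E[E[k(β⊙X, β⊙X')|X']E[k_Y(Y,Y')|Y']] with k(u,v) = φ(‖u−v‖²). Then HSIC(β⊙X; Y) = (1/8)(φ_Y(1) − φ_Y(−1)) · L_Δ(β), where L_Δ(β) = (φ(0) − φ(4β₁² + 4β₂²))(Δ₁² + Δ₂²) − (φ(4β₁²)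 − φ(4β₂²))(Δ₁² − Δ₂²). -/
/-- The sign set {−1, 1}. -/
noncomputable def Sg : Finset ℝ := {-1, 1}

/-- The probability mass function P_Δ(x₁,x₂,y) = (1/8)(1 + Δ₁x₁y)(1 + Δ₂x₂y) on {±1}³. -/
noncomputable def Pd (Δ₁ Δ₂ x₁ x₂ y : ℝ) : ℝ := 1 / 8 * (1 + Δ₁ * x₁ * y) * (1 + Δ₂ * x₂ * y)

/-- Marginal of (X₁,X₂) under P_Δ. -/
noncomputable def Pm (Δ₁ Δ₂ x₁ x₂ : ℝ) : ℝ := Pd Δ₁ Δ₂ x₁ x₂ 1 + Pd Δ₁ Δ₂ x₁ x₂ (-1)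

/-- The kernel value k(β⊙x, β⊙x') = φ(‖β⊙x − β⊙x'‖²). -/
noncomputable def kB (φ : ℝ → ℝ) (β₁ β₂ x₁ x₂ x₁' x₂' : ℝ) : ℝ :=
  φ ((β₁ * x₁ - β₁ * x₁') ^ 2 + (β₂ * x₂ - β₂ * x₂') ^ 2)

/-!
On signs, `φY t = (φY 1 + φY (-1)) / 2 + (φY 1 - φY (-1)) / 2 * t`. Since `Y` is uniform, the
constant part of `k_Y` contributes `(φY 1 + φY (-1)) / 2 * E[k]` to each of the three terms, with
coefficients `1 + 1 - 2 = 0`; what remains is `(φY 1 - φY (-1)) / 2 * E[k(X, X') Y Y']`. As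
`∑_y y P_Δ(x, y) = (Δ₁ x₁ + Δ₂ x₂) / 4`, this cross moment is a finite sum, equal to `L_Δ(β) / 4`.
-/

open Finset

lemma sum_Sg {M : Type*} [AddCommMonoid M] (f : ℝ → M) : ∑ x ∈ Sg, f x = f (-1) + f 1 :=
  sum_pair (by norm_num)

lemma apply_mul_of_mem_Sg (ψ : ℝ → ℝ) {y y' : ℝ} (hy : y ∈ Sg) (hy' : y' ∈ Sg) :
    ψ (y * y') = (ψ 1 + ψ (-1)) / 2 + (ψ 1 - ψ (-1)) / 2 * (y * y') := by
  simp only [Sg, mem_insert, mem_singleton] at hy hy'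
  rcases hy with rfl | rfl <;> rcases hy' with rfl | rfl <;> norm_num <;> ring

lemma sum_Sg_half_mul_apply_mul (ψ : ℝ → ℝ) {y' : ℝ} (hy' : y' ∈ Sg) :
    ∑ y ∈ Sg, 1 / 2 * ψ (y * y') = (ψ 1 + ψ (-1)) / 2 := by
  simp only [Sg, mem_insert, mem_singleton] at hy'
  rcases hy' with rfl | rfl <;> simp only [sum_Sg] <;> norm_num <;> ring

lemma sum_Sg_sum_Sg_quarter_mul_apply_mul (ψ : ℝ → ℝ) :
    ∑ y ∈ Sg, ∑ y' ∈ Sg, 1 / 2 * (1 / 2) * ψ (y * y') = (ψ 1 + ψ (-1)) / 2 := by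
  simp only [sum_Sg]
  norm_num
  ring

/-- `E[g(X, Y, X', Y')]` for two independent copies `(X, Y)`, `(X', Y')` of `P_Δ`. -/
noncomputable def pairExpect (Δ₁ Δ₂ : ℝ) (g : ℝ → ℝ → ℝ → ℝ → ℝ → ℝ → ℝ) : ℝ :=
  ∑ x₁ ∈ Sg, ∑ x₂ ∈ Sg, ∑ y ∈ Sg, ∑ x₁' ∈ Sg, ∑ x₂' ∈ Sg, ∑ y' ∈ Sg,
    Pd Δ₁ Δ₂ x₁ x₂ y * Pd Δ₁ Δ₂ x₁' x₂' y' * g x₁ x₂ y x₁' x₂' y'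

section pairExpect

variable (Δ₁ Δ₂ : ℝ)

lemma pairExpect_congr {g h : ℝ → ℝ → ℝ → ℝ → ℝ → ℝ → ℝ}
    (hgh : ∀ x₁ ∈ Sg, ∀ x₂ ∈ Sg, ∀ y ∈ Sg, ∀ x₁' ∈ Sg, ∀ x₂' ∈ Sg, ∀ y' ∈ Sg,
      g x₁ x₂ y x₁' x₂' y' = h x₁ x₂ y x₁' x₂' y') :
    pairExpect Δ₁ Δ₂ g = pairExpect Δ₁ Δ₂ h :=
  sum_congr rfl fun x₁ h₁ => sum_congr rfl fun x₂ h₂ => sum_congr rfl fun y hy =>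
    sum_congr rfl fun x₁' h₁' => sum_congr rfl fun x₂' h₂' => sum_congr rfl fun y' hy' => by
      rw [hgh x₁ h₁ x₂ h₂ y hy x₁' h₁' x₂' h₂' y' hy']

lemma pairExpect_mul_add_mul (c d : ℝ) (g h : ℝ → ℝ → ℝ → ℝ → ℝ → ℝ → ℝ) :
    pairExpect Δ₁ Δ₂
        (fun x₁ x₂ y x₁' x₂' y' => c * g x₁ x₂ y x₁' x₂' y' + d * h x₁ x₂ y x₁' x₂' y')
      = c * pairExpect Δ₁ Δ₂ g + d * pairExpect Δ₁ Δ₂ h := by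
  simp only [pairExpect, mul_sum, ← sum_add_distrib]
  refine sum_congr rfl fun _ _ => sum_congr rfl fun _ _ => sum_congr rfl fun _ _ =>
    sum_congr rfl fun _ _ => sum_congr rfl fun _ _ => sum_congr rfl fun _ _ => by ring

lemma pairExpect_eq_sum_marginal (g : ℝ → ℝ → ℝ → ℝ → ℝ) :
    pairExpect Δ₁ Δ₂ (fun x₁ x₂ _ x₁' x₂' _ => g x₁ x₂ x₁' x₂')
      = ∑ x₁' ∈ Sg, ∑ x₂' ∈ Sg, ∑ y' ∈ Sg,
          Pd Δ₁ Δ₂ x₁' x₂' y' * ∑ x₁ ∈ Sg, ∑ x₂ ∈ Sg, Pm Δ₁ Δ₂ x₁ x₂ * g x₁ x₂ x₁' x₂' := by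
  simp only [pairExpect, Pm, sum_Sg]
  ring

lemma sum_Pd_mul_marginal_mul_sum_half (g : ℝ → ℝ → ℝ → ℝ → ℝ) (ψ : ℝ → ℝ) :
    ∑ x₁' ∈ Sg, ∑ x₂' ∈ Sg, ∑ y' ∈ Sg, Pd Δ₁ Δ₂ x₁' x₂' y'
        * ((∑ x₁ ∈ Sg, ∑ x₂ ∈ Sg, Pm Δ₁ Δ₂ x₁ x₂ * g x₁ x₂ x₁' x₂')
          * (∑ y ∈ Sg, 1 / 2 * ψ (y * y')))
      = pairExpect Δ₁ Δ₂ (fun x₁ x₂ _ x₁' x₂' _ => g x₁ x₂ x₁' x₂') * ((ψ 1 + ψ (-1)) / 2) := calc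
    _ = ∑ x₁' ∈ Sg, ∑ x₂' ∈ Sg, ∑ y' ∈ Sg, Pd Δ₁ Δ₂ x₁' x₂' y'
          * (∑ x₁ ∈ Sg, ∑ x₂ ∈ Sg, Pm Δ₁ Δ₂ x₁ x₂ * g x₁ x₂ x₁' x₂') * ((ψ 1 + ψ (-1)) / 2) :=
      sum_congr rfl fun _ _ => sum_congr rfl fun _ _ => sum_congr rfl fun _ hy' => by
        rw [sum_Sg_half_mul_apply_mul ψ hy', mul_assoc]
    _ = _ := by rw [pairExpect_eq_sum_marginal]; simp only [sum_mul]

variable (φ : ℝ → ℝ) (β₁ β₂ : ℝ)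

lemma pairExpect_kB_mul_mul :
    pairExpect Δ₁ Δ₂ (fun x₁ x₂ y x₁' x₂' y' => kB φ β₁ β₂ x₁ x₂ x₁' x₂' * (y * y'))
      = L φ Δ₁ Δ₂ β₁ β₂ / 4 := by
  simp only [pairExpect, Pd, kB, L, sum_Sg]
  ring_nf

lemma pairExpect_kB_mul_apply_mul (ψ : ℝ → ℝ) :
    pairExpect Δ₁ Δ₂ (fun x₁ x₂ y x₁' x₂' y' => kB φ β₁ β₂ x₁ x₂ x₁' x₂' * ψ (y * y'))
      = (ψ 1 + ψ (-1)) / 2 * pairExpect Δ₁ Δ₂ (fun x₁ x₂ _ x₁' x₂' _ => kB φ β₁ β₂ x₁ x₂ x₁' x₂')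
        + (ψ 1 - ψ (-1)) / 2 * (L φ Δ₁ Δ₂ β₁ β₂ / 4) := by
  rw [← pairExpect_kB_mul_mul, ← pairExpect_mul_add_mul]
  refine pairExpect_congr _ _ fun _ _ _ _ y hy _ _ _ _ y' hy' => ?_
  rw [apply_mul_of_mem_Sg ψ hy hy']
  ring

end pairExpect

theorem stmt14_general (φ φY : ℝ → ℝ) (Δ₁ Δ₂ β₁ β₂ : ℝ) :
    (∑ x₁ ∈ Sg, ∑ x₂ ∈ Sg, ∑ y ∈ Sg, ∑ x₁' ∈ Sg, ∑ x₂' ∈ Sg, ∑ y' ∈ Sg,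
        Pd Δ₁ Δ₂ x₁ x₂ y * Pd Δ₁ Δ₂ x₁' x₂' y'
          * (kB φ β₁ β₂ x₁ x₂ x₁' x₂' * φY (y * y')))
    + (∑ x₁ ∈ Sg, ∑ x₂ ∈ Sg, ∑ y ∈ Sg, ∑ x₁' ∈ Sg, ∑ x₂' ∈ Sg, ∑ y' ∈ Sg,
        Pd Δ₁ Δ₂ x₁ x₂ y * Pd Δ₁ Δ₂ x₁' x₂' y' * kB φ β₁ β₂ x₁ x₂ x₁' x₂')
      * (∑ y ∈ Sg, ∑ y' ∈ Sg, 1 / 2 * (1 / 2) * φY (y * y'))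
    - 2 * (∑ x₁' ∈ Sg, ∑ x₂' ∈ Sg, ∑ y' ∈ Sg, Pd Δ₁ Δ₂ x₁' x₂' y'
        * ((∑ x₁ ∈ Sg, ∑ x₂ ∈ Sg, Pm Δ₁ Δ₂ x₁ x₂ * kB φ β₁ β₂ x₁ x₂ x₁' x₂')
          * (∑ y ∈ Sg, 1 / 2 * φY (y * y'))))
    = 1 / 8 * (φY 1 - φY (-1)) * L φ Δ₁ Δ₂ β₁ β₂ := by
  have h_joint := pairExpect_kB_mul_apply_mul Δ₁ Δ₂ φ β₁ β₂ φY
  have h_cond := sum_Pd_mul_marginal_mul_sum_half Δ₁ Δ₂ (kB φ β₁ β₂) φY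
  simp only [pairExpect] at h_joint h_cond
  rw [h_joint, sum_Sg_sum_Sg_quarter_mul_apply_mul, h_cond]
  ring

/-- with (X,Y), (X',Y') i.i.d. from P_Δ and k_Y(y,y') = φ_Y(yy') with
φ_Y(1) > φ_Y(−1), HSIC(β⊙X; Y) = E[k k_Y] + E[k]E[k_Y] − 2E[E[k|X']E[k_Y|Y']]
equals (1/8)(φ_Y(1) − φ_Y(−1))·L_Δ(β).  All expectations are written as finite sums with
weights P_Δ.  Here E[Y=y] has probability 1/2 for each sign. -/
theorem stmt14 (φ φY : ℝ → ℝ) (Δ₁ Δ₂ β₁ β₂ : ℝ)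
    (hΔ₁ : Δ₁ ∈ Set.Icc (0:ℝ) 1) (hΔ₂ : Δ₂ ∈ Set.Icc (0:ℝ) 1) (hY : φY (-1) < φY 1) :
    (∑ x₁ ∈ Sg, ∑ x₂ ∈ Sg, ∑ y ∈ Sg, ∑ x₁' ∈ Sg, ∑ x₂' ∈ Sg, ∑ y' ∈ Sg,
        Pd Δ₁ Δ₂ x₁ x₂ y * Pd Δ₁ Δ₂ x₁' x₂' y'
          * (kB φ β₁ β₂ x₁ x₂ x₁' x₂' * φY (y * y')))
    + (∑ x₁ ∈ Sg, ∑ x₂ ∈ Sg, ∑ y ∈ Sg, ∑ x₁' ∈ Sg, ∑ x₂' ∈ Sg, ∑ y' ∈ Sg,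
        Pd Δ₁ Δ₂ x₁ x₂ y * Pd Δ₁ Δ₂ x₁' x₂' y' * kB φ β₁ β₂ x₁ x₂ x₁' x₂')
      * (∑ y ∈ Sg, ∑ y' ∈ Sg, 1 / 2 * (1 / 2) * φY (y * y'))
    - 2 * (∑ x₁' ∈ Sg, ∑ x₂' ∈ Sg, ∑ y' ∈ Sg, Pd Δ₁ Δ₂ x₁' x₂' y'
        * ((∑ x₁ ∈ Sg, ∑ x₂ ∈ Sg, Pm Δ₁ Δ₂ x₁ x₂ * kB φ β₁ β₂ x₁ x₂ x₁' x₂')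
          * (∑ y ∈ Sg, 1 / 2 * φY (y * y'))))
    = 1 / 8 * (φY 1 - φY (-1)) * L φ Δ₁ Δ₂ β₁ β₂ :=
  stmt14_general φ φY Δ₁ Δ₂ β₁ β₂
end
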